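/- arXiv:2412.16019 — 6 statements merged into one kernel-verified Lean document; each statement's English description precedes it below -/
import Mathlib

section
/- Let c ≥ 3 be an integer and F₁ > 0 a real number, and let P(x) = x³ − (c+1)x² + cx − F₁. Then the greatest real root ξ of P satisfies ξ > c, ξ is a simple root of P, and every other (real or complex) root of P has modulus strictly less than ξ. -/
/-!
Write `P(x) = x (x - 1) (x - c) - F₁`. Since `P(c) = -F₁ < 0`, there is a root beyond `c`, and
there `P' = (x - 1)(x - c) + x (x - c) + x (x - 1) > 0`. Every real root is positive, because
`x (x - 1) (x - c) ≤ 0` for `x ≤ 0`. Dividing out `x - ξ` leaves the real quadratic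
`x² + (ξ - c - 1) x + (ξ - 1)(ξ - c)`, so a non-real root `w` has `‖w‖² = (ξ - 1)(ξ - c) < ξ²`.
-/

theorem cubic_eq_sub_mul_quadratic {R : Type*} [CommRing R] {c F r : R}
    (hr : r ^ 3 - (c + 1) * r ^ 2 + c * r - F = 0) (z : R) :
    z ^ 3 - (c + 1) * z ^ 2 + c * z - F
      = (z - r) * (z ^ 2 + (r - c - 1) * z + (r - 1) * (r - c)) := by
  linear_combination hr

theorem Complex.sq_norm_eq_of_quadratic_root {p q : ℝ} {w : ℂ}
    (hw : w ^ 2 + p * w + q = 0) (him : w.im ≠ 0) : ‖w‖ ^ 2 = q := by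
  have hre := congrArg Complex.re hw
  have him' := congrArg Complex.im hw
  simp only [pow_two, Complex.add_re, Complex.mul_re, Complex.ofReal_re, Complex.ofReal_im,
    Complex.add_im, Complex.mul_im, Complex.zero_re, Complex.zero_im] at hre him'
  have hp : p = -2 * w.re := mul_left_cancel₀ him (by linarith)
  rw [Complex.sq_norm, Complex.normSq_apply]
  subst hp
  nlinarith

section CubicRoots

variable {c F : ℝ}

theorem exists_cubic_root_gt (hc : 0 ≤ c) (hF : 0 < F) :
    ∃ y, c < y ∧ y ^ 3 - (c + 1) * y ^ 2 + c * y - F = 0 := by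
  have hcont : ContinuousOn (fun x : ℝ => x ^ 3 - (c + 1) * x ^ 2 + c * x - F)
      (Set.Icc c (c + 1 + F)) := by fun_prop
  have hPc : c ^ 3 - (c + 1) * c ^ 2 + c * c - F = -F := by ring
  have hPb : (c + 1 + F) ^ 3 - (c + 1) * (c + 1 + F) ^ 2 + c * (c + 1 + F) - F
      = (c + 1 + F) * (c + F) * (1 + F) - F := by ring
  have hbig : F ≤ (c + 1 + F) * (c + F) * (1 + F) :=
    calc F = 1 * F * 1 := by ring
      _ ≤ (c + 1 + F) * (c + F) * (1 + F) := by gcongr <;> linarith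
  obtain ⟨y, ⟨hcy, -⟩, hy⟩ := intermediate_value_Icc (by linarith) hcont
    (show (0 : ℝ) ∈ Set.Icc _ _ from ⟨by simp only [hPc]; linarith, by simp only [hPb]; linarith⟩)
  refine ⟨y, hcy.lt_of_ne ?_, hy⟩
  rintro rfl
  linarith

theorem cubic_root_pos (hc : 0 ≤ c) (hF : 0 < F) {x : ℝ}
    (hx : x ^ 3 - (c + 1) * x ^ 2 + c * x - F = 0) : 0 < x := by
  by_contra! hx0
  have hprod : x * (x - 1) * (x - c) = F := by linear_combination hx
  nlinarith [mul_nonneg (mul_nonneg_of_nonpos_of_nonpos hx0 (by linarith : x - 1 ≤ 0))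
    (by linarith : 0 ≤ c - x)]

theorem deriv_cubic (x : ℝ) :
    deriv (fun x : ℝ => x ^ 3 - (c + 1) * x ^ 2 + c * x - F) x
      = 3 * x ^ 2 - 2 * (c + 1) * x + c := by
  rw [deriv_sub_const, deriv_fun_add (by fun_prop) (by fun_prop),
    deriv_fun_sub (by fun_prop) (by fun_prop), deriv_const_mul _ (by fun_prop)]
  simp only [differentiableAt_fun_id, deriv_fun_pow, deriv_id'', deriv_const_mul_id']
  ring

theorem cubic_deriv_pos (hc : 1 ≤ c) {x : ℝ} (hx : c < x) :
    0 < 3 * x ^ 2 - 2 * (c + 1) * x + c := by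
  have h1 : 0 < x - 1 := by linarith
  have hc0 : 0 < x - c := by linarith
  have h0 : 0 < x := by linarith
  have hsplit : 3 * x ^ 2 - 2 * (c + 1) * x + c
      = (x - 1) * (x - c) + x * (x - c) + x * (x - 1) := by ring
  rw [hsplit]
  positivity

theorem norm_lt_of_cubic_root_of_im_ne_zero {ξ : ℝ} (hc : 0 ≤ c) (hξ : c < ξ)
    (hroot : ξ ^ 3 - (c + 1) * ξ ^ 2 + c * ξ - F = 0) {w : ℂ}
    (hw : w ^ 3 - ((c : ℂ) + 1) * w ^ 2 + c * w - F = 0) (him : w.im ≠ 0) : ‖w‖ < ξ := by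
  have hrootℂ : (ξ : ℂ) ^ 3 - ((c : ℂ) + 1) * (ξ : ℂ) ^ 2 + c * ξ - F = 0 := by
    exact_mod_cast congrArg Complex.ofReal hroot
  have hwξ : w - ξ ≠ 0 := fun h => him (by simpa using congrArg Complex.im h)
  have hquad : w ^ 2 + ((ξ - c - 1 : ℝ) : ℂ) * w + ((ξ - 1) * (ξ - c) : ℝ) = 0 := by
    push_cast
    exact (mul_eq_zero.mp ((cubic_eq_sub_mul_quadratic hrootℂ w).symm.trans hw)).resolve_left hwξ
  have hsq : ‖w‖ ^ 2 < ξ ^ 2 := by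
    rw [Complex.sq_norm_eq_of_quadratic_root hquad him]
    nlinarith
  exact lt_of_pow_lt_pow_left₀ 2 (by linarith) hsq

end CubicRoots

/-- For an integer `c ≥ 3` and a real `F₁ > 0`, the greatest real root `ξ` of
`P(x) = x³ − (c+1)x² + cx − F₁` satisfies `ξ > c`, is a simple root of `P`, and every other
complex root of `P` has modulus strictly less than `ξ`. -/
theorem cubic_dominant_root (c : ℕ) (hc : 3 ≤ c) (F₁ : ℝ) (hF : 0 < F₁)
    (P : ℝ → ℝ) (hP : ∀ x, P x = x ^ 3 - (c + 1) * x ^ 2 + c * x - F₁)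
    (ξ : ℝ) (hroot : P ξ = 0) (hmax : ∀ y : ℝ, P y = 0 → y ≤ ξ) :
    (c : ℝ) < ξ ∧ deriv P ξ ≠ 0 ∧
      ∀ w : ℂ, w ^ 3 - ((c : ℂ) + 1) * w ^ 2 + (c : ℂ) * w - (F₁ : ℂ) = 0 →
        w ≠ (ξ : ℂ) → ‖w‖ < ξ := by
  have hc1 : (1 : ℝ) ≤ c := by exact_mod_cast (by omega : 1 ≤ c)
  obtain rfl : P = fun x => x ^ 3 - (c + 1) * x ^ 2 + c * x - F₁ := funext hP
  obtain ⟨y, hcy, hy⟩ := exists_cubic_root_gt (c := (c : ℝ)) (by positivity) hF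
  have hcξ : (c : ℝ) < ξ := hcy.trans_le (hmax y hy)
  refine ⟨hcξ, by rw [deriv_cubic]; exact (cubic_deriv_pos hc1 hcξ).ne', fun w hw hwξ => ?_⟩
  by_cases him : w.im = 0
  · obtain ⟨x, rfl⟩ : ∃ x : ℝ, (x : ℂ) = w := ⟨w.re, Complex.ext rfl (by simp [him])⟩
    have hx : x ^ 3 - (c + 1) * x ^ 2 + c * x - F₁ = 0 := by exact_mod_cast hw
    rw [Complex.norm_real, Real.norm_of_nonneg (cubic_root_pos (by positivity) hF hx).le]
    exact (hmax x hx).lt_of_ne (by exact_mod_cast hwξ)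
  · exact norm_lt_of_cubic_root_of_im_ne_zero (by positivity) hcξ hroot hw him
end

section
/- Let z ≥ 1, let b₁, …, b_z be positive reals, set F₁ = ∑ b_i² and S = ∑ b_i. Define the sequence (L_k) by L₀ = 1 and L_k = c·L_{k−1} + ∑_{r=0}^{k−3} L_r · ∑_{q≥0} C(k−3−r−q, q) · F₁ · S^q for k ≥ 1 (where c ≥ 3 is a fixed integer). Then for all k ≥ 3, L_k − (c+1)L_{k−1} + (c − S)L_{k−2} + (cS − F₁)L_{k−3} = 0. -/
private def fseqAux (S : ℝ) (m : ℕ) : ℝ :=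
  ∑ q ∈ Finset.range (m + 1), ((m - q).choose q : ℝ) * S ^ q

private lemma fseqAux_zero (S : ℝ) : fseqAux S 0 = 1 := by
  unfold fseqAux; simp

private lemma fseqAux_one (S : ℝ) : fseqAux S 1 = 1 := by
  unfold fseqAux
  rw [Finset.sum_range_succ, Finset.sum_range_succ, Finset.sum_range_zero]
  norm_num

private lemma fseqAux_rec (S : ℝ) (m : ℕ) :
    fseqAux S (m + 2) = fseqAux S (m + 1) + S * fseqAux S m := by
  have hL : fseqAux S (m + 2)
      = (∑ p ∈ Finset.range (m + 2), ((m + 2 - (p + 1)).choose (p + 1) : ℝ) * S ^ (p + 1))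
        + 1 := by
    unfold fseqAux
    rw [Finset.sum_range_succ' _ (m + 2)]
    norm_num
  have hR : fseqAux S (m + 1)
      = (∑ p ∈ Finset.range (m + 1), ((m - p).choose (p + 1) : ℝ) * S ^ (p + 1)) + 1 := by
    unfold fseqAux
    rw [Finset.sum_range_succ' _ (m + 1)]
    have : ∀ p ∈ Finset.range (m + 1),
        ((m + 1 - (p + 1)).choose (p + 1) : ℝ) * S ^ (p + 1)
          = ((m - p).choose (p + 1) : ℝ) * S ^ (p + 1) := by
      intro p hp
      congr 3
      omega
    rw [Finset.sum_congr rfl this]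
    norm_num
  rw [hL, hR]
  have h1 : ∀ p ∈ Finset.range (m + 2),
      ((m + 2 - (p + 1)).choose (p + 1) : ℝ) * S ^ (p + 1)
        = ((m - p).choose p : ℝ) * S ^ p * S
          + ((m - p).choose (p + 1) : ℝ) * S ^ (p + 1) := by
    intro p hp
    rw [Finset.mem_range] at hp
    have key : (m + 2 - (p + 1)).choose (p + 1)
        = (m - p).choose p + (m - p).choose (p + 1) := by
      rcases Nat.lt_or_ge p (m + 1) with h | h
      · have e : m + 2 - (p + 1) = (m - p) + 1 := by omega
        rw [e, Nat.choose_succ_succ]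
      · have hp' : p = m + 1 := by omega
        subst hp'
        have e1 : m + 2 - (m + 1 + 1) = 0 := by omega
        have e2 : m - (m + 1) = 0 := by omega
        rw [e1, e2]
        simp
    rw [key]
    push_cast
    ring
  rw [Finset.sum_congr rfl h1, Finset.sum_add_distrib]
  have h2 : ∑ p ∈ Finset.range (m + 2), ((m - p).choose p : ℝ) * S ^ p * S
      = (∑ q ∈ Finset.range (m + 1), ((m - q).choose q : ℝ) * S ^ q) * S := by
    rw [Finset.sum_range_succ]
    have e0 : m - (m + 1) = 0 := by omega
    rw [e0, Nat.choose_eq_zero_of_lt (by omega)]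
    simp [Finset.sum_mul]
  have h3 : ∑ p ∈ Finset.range (m + 2), ((m - p).choose (p + 1) : ℝ) * S ^ (p + 1)
      = ∑ p ∈ Finset.range (m + 1), ((m - p).choose (p + 1) : ℝ) * S ^ (p + 1) := by
    rw [Finset.sum_range_succ]
    have e0 : m - (m + 1) = 0 := by omega
    rw [e0, Nat.choose_eq_zero_of_lt (by omega)]
    simp
  rw [h2, h3]
  unfold fseqAux
  ring

/-- The sequence with `L₀ = 1` and
`L_k = c·L_{k−1} + ∑_{r=0}^{k−3} L_r · ∑_{q≥0} C(k−3−r−q, q)·F₁·S^q` for `k ≥ 1`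
satisfies `L_k − (c+1)L_{k−1} + (c − S)L_{k−2} + (cS − F₁)L_{k−3} = 0` for all `k ≥ 3`.
(The inner sum over `q` is truncated at `q < k`, which loses nothing since the binomial
coefficient vanishes there.) -/
theorem lazy_walk_aux_recurrence_upper (c z : ℕ) (hc : 3 ≤ c) (hz : 1 ≤ z)
    (b : Fin z → ℝ) (hb : ∀ i, 0 < b i)
    (F₁ S : ℝ) (hF : F₁ = ∑ i, b i ^ 2) (hS : S = ∑ i, b i)
    (L : ℕ → ℝ) (h0 : L 0 = 1)
    (hrec : ∀ k : ℕ, 1 ≤ k →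
      L k = c * L (k - 1) +
        ∑ r ∈ Finset.range (k - 2), L r *
          ∑ q ∈ Finset.range k, ((k - 3 - r - q).choose q : ℝ) * F₁ * S ^ q) :
    ∀ k : ℕ, 3 ≤ k →
      L k - (c + 1) * L (k - 1) + (c - S) * L (k - 2) + (c * S - F₁) * L (k - 3) = 0 := by
  -- basic values
  have hL1 : L 1 = c := by
    have h := hrec 1 le_rfl
    norm_num [h0] at h
    exact h
  have hL2 : L 2 = c * c := by
    have h := hrec 2 (by norm_num)
    norm_num [hL1] at h
    linarith [h]
  -- key reformulation of the recurrence
  have key : ∀ k : ℕ, 3 ≤ k →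
      L k = c * L (k - 1) + F₁ * ∑ r ∈ Finset.range (k - 2), L r * fseqAux S (k - 3 - r) := by
    intro k hk
    rw [hrec k (by omega)]
    congr 1
    rw [Finset.mul_sum]
    apply Finset.sum_congr rfl
    intro r hr
    rw [Finset.mem_range] at hr
    have hr' : r ≤ k - 3 := by omega
    have hsub : Finset.range (k - 3 - r + 1) ⊆ Finset.range k :=
      Finset.range_subset_range.2 (by omega)
    have hz2 : ∀ q ∈ Finset.range k, q ∉ Finset.range (k - 3 - r + 1) →
        ((k - 3 - r - q).choose q : ℝ) * F₁ * S ^ q = 0 := by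
      intro q hq hq2
      rw [Finset.mem_range] at hq hq2
      have e : k - 3 - r - q = 0 := by omega
      rw [e, Nat.choose_eq_zero_of_lt (by omega)]
      simp
    have inner : (∑ q ∈ Finset.range k, ((k - 3 - r - q).choose q : ℝ) * F₁ * S ^ q)
        = F₁ * fseqAux S (k - 3 - r) := by
      rw [← Finset.sum_subset hsub hz2]
      unfold fseqAux
      rw [Finset.mul_sum]
      exact Finset.sum_congr rfl fun q _ => by ring
    rw [inner]
    ring
  -- recurrence for the convolution sums
  have Arec : ∀ m : ℕ,
      (∑ r ∈ Finset.range (m + 3), L r * fseqAux S (m + 2 - r))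
        = L (m + 2) + (∑ r ∈ Finset.range (m + 2), L r * fseqAux S (m + 1 - r))
          + S * ∑ r ∈ Finset.range (m + 1), L r * fseqAux S (m - r) := by
    intro m
    rw [Finset.sum_range_succ, Finset.sum_range_succ _ (m + 1),
      Finset.sum_range_succ _ (m + 1)]
    have h1 : ∀ r ∈ Finset.range (m + 1), L r * fseqAux S (m + 2 - r)
        = L r * fseqAux S (m + 1 - r) + S * (L r * fseqAux S (m - r)) := by
      intro r hr
      rw [Finset.mem_range] at hr
      have e2 : m + 2 - r = (m - r) + 2 := by omega
      have e1 : m + 1 - r = (m - r) + 1 := by omega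
      rw [e2, e1, fseqAux_rec]
      ring
    rw [Finset.sum_congr rfl h1, Finset.sum_add_distrib, ← Finset.mul_sum]
    have em1 : m + 2 - (m + 1) = 1 := by omega
    have em2 : m + 2 - (m + 2) = 0 := by omega
    have em3 : m + 1 - (m + 1) = 0 := by omega
    rw [em1, em2, em3, fseqAux_zero, fseqAux_one]
    ring
  intro k hk
  rcases Nat.lt_or_ge k 5 with h5 | h5
  · -- small cases k = 3, 4
    have e3 := hrec 3 (by norm_num)
    norm_num [Finset.sum_range_succ, h0, hL1, hL2] at e3
    interval_cases k
    · norm_num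
      linear_combination e3 - ((c : ℝ) + 1) * hL2 + ((c : ℝ) - S) * hL1
        + ((c : ℝ) * S - F₁) * h0
    · have e4 := hrec 4 (by norm_num)
      norm_num [Finset.sum_range_succ, h0, hL1, hL2, e3] at e4
      norm_num
      linear_combination e4 - ((c : ℝ) + 1) * e3 + ((c : ℝ) - S) * hL2
        + ((c : ℝ) * S - F₁) * hL1
  · obtain ⟨m, rfl⟩ : ∃ m, k = m + 5 := ⟨k - 5, by omega⟩
    have e1 := key (m + 5) (by omega)
    have e2 := key (m + 4) (by omega)
    have e3 := key (m + 3) (by omega)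
    have hA := Arec m
    rw [show m + 5 - 1 = m + 4 from rfl, show m + 5 - 2 = m + 3 from rfl,
      show m + 5 - 3 = m + 2 from rfl] at e1 ⊢
    rw [show m + 4 - 1 = m + 3 from rfl, show m + 4 - 2 = m + 2 from rfl,
      show m + 4 - 3 = m + 1 from rfl] at e2
    rw [show m + 3 - 1 = m + 2 from rfl, show m + 3 - 2 = m + 1 from rfl,
      show m + 3 - 3 = m + 0 from rfl] at e3
    rw [show m + 0 = m from rfl] at e3
    linear_combination e1 - e2 - S * e3 + F₁ * hA
end

section
/- Let z ≥ 1 and let b₁, …, b_z be positive reals with b_i < c for all i, where c ≥ 3 is an integer. Set S = ∑ b_i and F₁ = ∑ b_i². Let P(x) = x³ − (c+1)x² + (c − S)x + (cS − F₁). Then P has three simple real roots ξ > c, ξ₂ ∈ (0, c), ξ₃ < 0, and ξ has strictly greater absolute value than ξ₂ and ξ₃. -/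
/-!
`P(0) = cS - F₁ > 0` because `bᵢ² < c bᵢ`, while `P(c) = -F₁ < 0`, `P(-(S+1)) < 0` and
`P(c + S + F₁ + 1) > 0`; the intermediate value theorem gives a root in each of `(c, ∞)`,
`(0, c)` and `(-∞, 0)`. Three distinct roots of a monic cubic factor it completely, so the
derivative at each root is a product of nonzero differences, and Vieta's
`ξ + ξ₂ + ξ₃ = c + 1` bounds `|ξ₃|` by `ξ`.
-/

open Finset

section Vieta

variable {R : Type*} [CommRing R] [IsDomain R] {f : R → R} {a b d r₁ r₂ r₃ : R}

theorem cubic_vieta (hf : ∀ x, f x = x ^ 3 + a * x ^ 2 + b * x + d)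
    (h₁₂ : r₁ ≠ r₂) (h₁₃ : r₁ ≠ r₃) (h₂₃ : r₂ ≠ r₃)
    (h₁ : f r₁ = 0) (h₂ : f r₂ = 0) (h₃ : f r₃ = 0) :
    a = -(r₁ + r₂ + r₃) ∧ b = r₁ * r₂ + r₁ * r₃ + r₂ * r₃ ∧ d = -(r₁ * r₂ * r₃) := by
  rw [hf] at h₁ h₂ h₃
  have e₁₂ : r₁ ^ 2 + r₁ * r₂ + r₂ ^ 2 + a * (r₁ + r₂) + b = 0 :=
    mul_left_cancel₀ (sub_ne_zero.2 h₁₂) (by linear_combination h₁ - h₂)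
  have e₁₃ : r₁ ^ 2 + r₁ * r₃ + r₃ ^ 2 + a * (r₁ + r₃) + b = 0 :=
    mul_left_cancel₀ (sub_ne_zero.2 h₁₃) (by linear_combination h₁ - h₃)
  have ha : a = -(r₁ + r₂ + r₃) :=
    mul_left_cancel₀ (sub_ne_zero.2 h₂₃) (by linear_combination e₁₂ - e₁₃)
  have hb : b = r₁ * r₂ + r₁ * r₃ + r₂ * r₃ := by
    linear_combination e₁₂ - (r₁ + r₂) * ha
  exact ⟨ha, hb, by linear_combination h₁ - r₁ ^ 2 * ha - r₁ * hb⟩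

theorem eq_mul_of_three_roots (hf : ∀ x, f x = x ^ 3 + a * x ^ 2 + b * x + d)
    (h₁₂ : r₁ ≠ r₂) (h₁₃ : r₁ ≠ r₃) (h₂₃ : r₂ ≠ r₃)
    (h₁ : f r₁ = 0) (h₂ : f r₂ = 0) (h₃ : f r₃ = 0) (x : R) :
    f x = (x - r₁) * (x - r₂) * (x - r₃) := by
  obtain ⟨rfl, rfl, rfl⟩ := cubic_vieta hf h₁₂ h₁₃ h₂₃ h₁ h₂ h₃
  rw [hf]
  ring

end Vieta

theorem deriv_ne_zero_of_eq_mul_sub {𝕜 : Type*} [NontriviallyNormedField 𝕜] {f : 𝕜 → 𝕜}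
    {r s t : 𝕜} (hf : ∀ x, f x = (x - r) * ((x - s) * (x - t))) (hs : r ≠ s) (ht : r ≠ t) :
    deriv f r ≠ 0 := by
  rw [funext hf, deriv_fun_mul (by fun_prop) (by fun_prop), sub_self, zero_mul, add_zero,
    deriv_sub_const, deriv_id'', one_mul]
  exact mul_ne_zero (sub_ne_zero.2 hs) (sub_ne_zero.2 ht)

section Cubic

def cubicP (c S F₁ x : ℝ) : ℝ := (x - c) * (x * (x - 1) - S) - F₁

variable {c S F₁ : ℝ}

theorem continuous_cubicP : Continuous (cubicP c S F₁) := by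
  unfold cubicP
  fun_prop

theorem cubicP_zero_pos (hFS : F₁ < c * S) : 0 < cubicP c S F₁ 0 := by
  unfold cubicP
  linarith

theorem cubicP_self_neg (hF : 0 < F₁) : cubicP c S F₁ c < 0 := by
  rw [cubicP, sub_self, zero_mul, zero_sub]
  exact neg_lt_zero.2 hF

theorem cubicP_neg_succ_neg (hc : 0 < c) (hS : 0 < S) (hF : 0 < F₁) :
    cubicP c S F₁ (-(S + 1)) < 0 := by
  have h : cubicP c S F₁ (-(S + 1)) = -((S + 1 + c) * (S ^ 2 + 2 * S + 2)) - F₁ := by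
    unfold cubicP; ring
  have : 0 < (S + 1 + c) * (S ^ 2 + 2 * S + 2) := by positivity
  linarith

theorem cubicP_large_pos (hc : 0 < c) (hS : 0 < S) (hF : 0 < F₁) :
    0 < cubicP c S F₁ (c + S + F₁ + 1) := by
  have h : cubicP c S F₁ (c + S + F₁ + 1) =
      (S + F₁) * ((c + S + F₁) ^ 2 + c + F₁) + (c + S + F₁) ^ 2 + c := by
    unfold cubicP; ring
  rw [h]
  positivity

theorem exists_roots_cubicP (hS : 0 < S) (hF : 0 < F₁) (hFS : F₁ < c * S) :
    ∃ ξ ξ₂ ξ₃ : ℝ, cubicP c S F₁ ξ = 0 ∧ cubicP c S F₁ ξ₂ = 0 ∧ cubicP c S F₁ ξ₃ = 0 ∧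
      c < ξ ∧ 0 < ξ₂ ∧ ξ₂ < c ∧ ξ₃ < 0 := by
  have hc : 0 < c := pos_of_mul_pos_left (hF.trans hFS) hS.le
  obtain ⟨ξ, ⟨hξ, -⟩, h₁⟩ :=
    intermediate_value_Ioo (by linarith) continuous_cubicP.continuousOn
      (show (0 : ℝ) ∈ Set.Ioo _ _ from ⟨cubicP_self_neg hF, cubicP_large_pos hc hS hF⟩)
  obtain ⟨ξ₂, ⟨hξ₂, hξ₂'⟩, h₂⟩ :=
    intermediate_value_Ioo' hc.le continuous_cubicP.continuousOn
      (show (0 : ℝ) ∈ Set.Ioo _ _ from ⟨cubicP_self_neg hF, cubicP_zero_pos hFS⟩)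
  obtain ⟨ξ₃, ⟨-, hξ₃⟩, h₃⟩ :=
    intermediate_value_Ioo (by linarith) continuous_cubicP.continuousOn
      (show (0 : ℝ) ∈ Set.Ioo _ _ from ⟨cubicP_neg_succ_neg hc hS hF, cubicP_zero_pos hFS⟩)
  exact ⟨ξ, ξ₂, ξ₃, h₁, h₂, h₃, hξ, hξ₂, hξ₂', hξ₃⟩

end Cubic

theorem sum_sq_lt_mul_sum {ι : Type*} {s : Finset ι} (hs : s.Nonempty) {b : ι → ℝ} {c : ℝ}
    (hb : ∀ i ∈ s, 0 < b i ∧ b i < c) : ∑ i ∈ s, b i ^ 2 < c * ∑ i ∈ s, b i := by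
  rw [mul_sum]
  refine sum_lt_sum_of_nonempty hs fun i hi => ?_
  nlinarith [hb i hi]

theorem cubic_three_real_roots_general (c z : ℕ) (hz : 1 ≤ z)
    (b : Fin z → ℝ) (hb : ∀ i, 0 < b i ∧ b i < c)
    (S F₁ : ℝ) (hS : S = ∑ i, b i) (hF : F₁ = ∑ i, b i ^ 2)
    (P : ℝ → ℝ)
    (hP : ∀ x, P x = x ^ 3 - (c + 1) * x ^ 2 + (c - S) * x + (c * S - F₁)) :
    ∃ ξ ξ₂ ξ₃ : ℝ, P ξ = 0 ∧ P ξ₂ = 0 ∧ P ξ₃ = 0 ∧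
      (c : ℝ) < ξ ∧ 0 < ξ₂ ∧ ξ₂ < c ∧ ξ₃ < 0 ∧
      deriv P ξ ≠ 0 ∧ deriv P ξ₂ ≠ 0 ∧ deriv P ξ₃ ≠ 0 ∧
      |ξ₂| < ξ ∧ |ξ₃| < ξ := by
  have hne : (univ : Finset (Fin z)).Nonempty := univ_nonempty_iff.2 ⟨⟨0, hz⟩⟩
  have hS₀ : 0 < S := hS ▸ sum_pos (fun i _ => (hb i).1) hne
  have hF₀ : 0 < F₁ := hF ▸ sum_pos (fun i _ => pow_pos (hb i).1 2) hne
  have hFS : F₁ < c * S := hS ▸ hF ▸ sum_sq_lt_mul_sum hne fun i _ => hb i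
  have hPcubic : ∀ x, P x = cubicP c S F₁ x := fun x => by rw [hP, cubicP]; ring
  obtain ⟨ξ, ξ₂, ξ₃, h₁, h₂, h₃, hξ, hξ₂, hξ₂c, hξ₃⟩ := exists_roots_cubicP hS₀ hF₀ hFS
  rw [← hPcubic] at h₁ h₂ h₃
  have hP' : ∀ x, P x = x ^ 3 + (-(c + 1)) * x ^ 2 + (c - S) * x + (c * S - F₁) :=
    fun x => by rw [hP]; ring
  have h₁₂ : ξ ≠ ξ₂ := by linarith
  have h₁₃ : ξ ≠ ξ₃ := by linarith
  have h₂₃ : ξ₂ ≠ ξ₃ := by linarith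
  have hsum := (cubic_vieta hP' h₁₂ h₁₃ h₂₃ h₁ h₂ h₃).1
  have hfac := eq_mul_of_three_roots hP' h₁₂ h₁₃ h₂₃ h₁ h₂ h₃
  refine ⟨ξ, ξ₂, ξ₃, h₁, h₂, h₃, hξ, hξ₂, hξ₂c, hξ₃,
    deriv_ne_zero_of_eq_mul_sub (fun x => by rw [hfac]; ring) h₁₂ h₁₃,
    deriv_ne_zero_of_eq_mul_sub (fun x => by rw [hfac]; ring) h₁₂.symm h₂₃,
    deriv_ne_zero_of_eq_mul_sub (fun x => by rw [hfac]; ring) h₁₃.symm h₂₃.symm, ?_, ?_⟩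
  · rw [abs_of_pos hξ₂]; linarith
  · rw [abs_of_neg hξ₃]; linarith

/-- With `S = ∑ bᵢ`, `F₁ = ∑ bᵢ²` for positive reals `bᵢ < c`, the cubic
`P(x) = x³ − (c+1)x² + (c−S)x + (cS−F₁)` has three simple real roots `ξ > c`,
`ξ₂ ∈ (0, c)`, `ξ₃ < 0`, and `ξ` has strictly greater absolute value than the others. -/
theorem cubic_three_real_roots (c z : ℕ) (hc : 3 ≤ c) (hz : 1 ≤ z)
    (b : Fin z → ℝ) (hb : ∀ i, 0 < b i ∧ b i < c)
    (S F₁ : ℝ) (hS : S = ∑ i, b i) (hF : F₁ = ∑ i, b i ^ 2)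
    (P : ℝ → ℝ)
    (hP : ∀ x, P x = x ^ 3 - (c + 1) * x ^ 2 + (c - S) * x + (c * S - F₁)) :
    ∃ ξ ξ₂ ξ₃ : ℝ, P ξ = 0 ∧ P ξ₂ = 0 ∧ P ξ₃ = 0 ∧
      (c : ℝ) < ξ ∧ 0 < ξ₂ ∧ ξ₂ < c ∧ ξ₃ < 0 ∧
      deriv P ξ ≠ 0 ∧ deriv P ξ₂ ≠ 0 ∧ deriv P ξ₃ ≠ 0 ∧
      |ξ₂| < ξ ∧ |ξ₃| < ξ :=
  cubic_three_real_roots_general c z hz b hb S F₁ hS hF P hP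
end

section
/- Let z ≥ 1 and b₁ ≥ b₂ ≥ ⋯ ≥ b_z > 0 be reals. For each p ≥ 2 define F_p = ∑_{i₁,…,i_p=1}^{z} b_{i₁}·min(b_{i₁},b_{i₂})·min(b_{i₂},b_{i₃})⋯min(b_{i_{p−1}},b_{i_p})·b_{i_p}, and F₁ = ∑ b_i². Then F_p ≤ F₁·(∑_{i=1}^z b_i)^{p−1} for all p ≥ 2. -/
/-- For nonincreasing positive reals `b₁ ≥ ⋯ ≥ b_z > 0` and
`F_p = ∑_{i₁,…,i_p} b_{i₁}·min(b_{i₁},b_{i₂})⋯min(b_{i_{p−1}},b_{i_p})·b_{i_p}`,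
`F₁ = ∑ bᵢ²`, we have `F_p ≤ F₁·(∑ bᵢ)^{p−1}` for all `p ≥ 2`. -/
theorem Fp_upper_bound (z : ℕ) (hz : 1 ≤ z) (b : Fin z → ℝ)
    (hpos : ∀ i, 0 < b i)
    (hmono : ∀ i j : Fin z, i ≤ j → b j ≤ b i)
    (p : ℕ) (hp : 2 ≤ p) :
    (∑ i : Fin p → Fin z,
        b (i ⟨0, by omega⟩) *
          (∏ t : Fin (p - 1),
            min (b (i ⟨t.1, by have := t.isLt; omega⟩))
                (b (i ⟨t.1 + 1, by have := t.isLt; omega⟩))) *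
          b (i ⟨p - 1, by omega⟩)) ≤
      (∑ i, b i ^ 2) * (∑ i, b i) ^ (p - 1) := by
  obtain ⟨n, rfl⟩ : ∃ n, p = n + 2 := ⟨p - 2, by omega⟩
  have hb : ∀ i, 0 ≤ b i := fun i => (hpos i).le
  set g : Fin (n + 2) → Fin z → ℝ :=
    fun s x => if s = Fin.last (n + 1) then b x ^ 2 else b x with hg
  calc (∑ i : Fin (n + 2) → Fin z,
        b (i ⟨0, by omega⟩) *
          (∏ t : Fin (n + 2 - 1),
            min (b (i ⟨t.1, by have := t.isLt; omega⟩))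
                (b (i ⟨t.1 + 1, by have := t.isLt; omega⟩))) *
          b (i ⟨n + 2 - 1, by omega⟩))
      ≤ ∑ i : Fin (n + 2) → Fin z, ∏ s, g s (i s) := by
        apply Finset.sum_le_sum
        intro i _
        have h1 : (∏ t : Fin (n + 2 - 1),
            min (b (i ⟨t.1, by have := t.isLt; omega⟩))
                (b (i ⟨t.1 + 1, by have := t.isLt; omega⟩)))
            ≤ ∏ t : Fin (n + 1), b (i t.succ) := by
          apply Finset.prod_le_prod
          · intro t _; exact le_min (hb _) (hb _) |>.trans (min_le_min le_rfl le_rfl) |>.trans le_rfl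
          · intro t _; exact min_le_right _ _
        have e : b (i ⟨0, by omega⟩) * ∏ t : Fin (n + 1), b (i t.succ)
            = (∏ t : Fin (n + 1), b (i t.castSucc)) * b (i (Fin.last (n + 1))) := by
          have h0 : (⟨0, by omega⟩ : Fin (n + 2)) = 0 := rfl
          rw [h0, ← Fin.prod_univ_succ (fun s : Fin (n + 2) => b (i s)),
            Fin.prod_univ_castSucc (fun s : Fin (n + 2) => b (i s))]
        have e2 : (∏ s, g s (i s))
            = (∏ t : Fin (n + 1), b (i t.castSucc)) * b (i (Fin.last (n + 1))) ^ 2 := by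
          rw [Fin.prod_univ_castSucc]
          simp [hg, fun t : Fin (n + 1) => (Fin.castSucc_lt_last t).ne]
        have hlast : (⟨n + 2 - 1, by omega⟩ : Fin (n + 2)) = Fin.last (n + 1) := rfl
        rw [e2, hlast]
        have hprodnn : (0 : ℝ) ≤ ∏ t : Fin (n + 1), b (i t.castSucc) :=
          Finset.prod_nonneg fun t _ => hb _
        have h2 : b (i ⟨0, by omega⟩) *
            (∏ t : Fin (n + 2 - 1),
              min (b (i ⟨t.1, by have := t.isLt; omega⟩))
                  (b (i ⟨t.1 + 1, by have := t.isLt; omega⟩))) *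
            b (i (Fin.last (n + 1)))
            ≤ b (i ⟨0, by omega⟩) * (∏ t : Fin (n + 1), b (i t.succ)) *
              b (i (Fin.last (n + 1))) := by
          apply mul_le_mul_of_nonneg_right _ (hb _)
          exact mul_le_mul_of_nonneg_left h1 (hb _)
        refine h2.trans_eq ?_
        rw [e]; ring
    _ = ∏ s : Fin (n + 2), ∑ x : Fin z, g s x := by
        rw [Finset.prod_univ_sum, Fintype.piFinset_univ]
    _ = (∑ x, b x ^ 2) * (∑ x, b x) ^ (n + 2 - 1) := by
        rw [Fin.prod_univ_castSucc]
        simp only [hg, fun t : Fin (n + 1) => (Fin.castSucc_lt_last t).ne, if_neg, if_pos rfl,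
          ite_false, ite_true]
        rw [Finset.prod_const]
        simp [mul_comm]
end

section
/- Let G be a connected threshold graph on n ≥ 4 vertices with c ≥ 3 type-1 vertices and BZP sequence b₁ ≥ ⋯ ≥ b_z (z ≥ 1, 1 ≤ b_i ≤ c−1), and let F₁ = ∑ b_i². Then the spectral radius ρ of G satisfies ρ > c − 1 + F₁/n². -/
/-!
Test the Rayleigh quotient of the adjacency matrix on the vector that is `1` on the clique and
`b i / r` on the `i`-th type-0 vertex, with `r = c - 1 + F₁ / n²`; this is the shape an
eigenvector for the eigenvalue `r` would have at the type-0 vertices. Its quotient is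
`(c (c - 1) + 2 F₁ / r) / (c + F₁ / r²)`, which exceeds `r` exactly when `c r < n²`, and that
holds because `F₁ / n² < z`. Since the quotient is at most the largest eigenvalue, `ρ > r`.
-/

open Matrix Finset

theorem Matrix.IsHermitian.dotProduct_mulVec_le {n : Type*} [Fintype n] [DecidableEq n]
    {A : Matrix n n ℝ} (hA : A.IsHermitian) {ρ : ℝ}
    (hρ : ∀ μ ∈ spectrum ℝ A, μ ≤ ρ) (x : n → ℝ) :
    x ⬝ᵥ A *ᵥ x ≤ ρ * (x ⬝ᵥ x) := by
  have hpsd : (algebraMap ℝ _ ρ - A).PosSemidef := by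
    refine posSemidef_iff_isHermitian_and_spectrum_nonneg.mpr
      ⟨(isHermitian_diagonal _).sub hA, ?_⟩
    rw [← spectrum.singleton_sub_eq]
    rintro _ ⟨_, rfl, μ, hμ, rfl⟩
    exact sub_nonneg.mpr (hρ μ hμ)
  have hx := hpsd.dotProduct_mulVec_nonneg x
  simp only [star_trivial, sub_mulVec, dotProduct_sub, Algebra.algebraMap_eq_smul_one,
    smul_mulVec, one_mulVec, dotProduct_smul, smul_eq_mul] at hx
  linarith

/-- The threshold graph with type-1 vertices `0, …, c - 1` and BZP sequence `b`: the type-0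
vertex `c + i` is joined to the first `b i` type-1 vertices. -/
def SimpleGraph.IsThresholdGraph {c z : ℕ} [NeZero z] (G : SimpleGraph (Fin (c + z)))
    (b : Fin z → ℕ) : Prop :=
  ∀ u v : Fin (c + z), G.Adj u v ↔ u ≠ v ∧
    ((u.1 < c ∧ v.1 < c) ∨
     (u.1 < c ∧ c ≤ v.1 ∧
        u.1 < b ⟨v.1 - c, by have := v.isLt; have := NeZero.one_le (n := z); omega⟩) ∨
     (v.1 < c ∧ c ≤ u.1 ∧
        v.1 < b ⟨u.1 - c, by have := u.isLt; have := NeZero.one_le (n := z); omega⟩))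

namespace SimpleGraph.IsThresholdGraph

variable {c z : ℕ} [NeZero z] {G : SimpleGraph (Fin (c + z))} {b : Fin z → ℕ}

theorem adj_castAdd_castAdd (hG : G.IsThresholdGraph b) (a a' : Fin c) :
    G.Adj (Fin.castAdd z a) (Fin.castAdd z a') ↔ a ≠ a' := by
  simp [hG _ _, Fin.ext_iff]

theorem adj_castAdd_natAdd (hG : G.IsThresholdGraph b) (a : Fin c) (i : Fin z) :
    G.Adj (Fin.castAdd z a) (Fin.natAdd c i) ↔ (a : ℕ) < b i := by
  simp [hG _ _, Fin.ext_iff]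
  omega

theorem adj_natAdd_castAdd (hG : G.IsThresholdGraph b) (i : Fin z) (a : Fin c) :
    G.Adj (Fin.natAdd c i) (Fin.castAdd z a) ↔ (a : ℕ) < b i :=
  (G.adj_comm _ _).trans (hG.adj_castAdd_natAdd a i)

theorem not_adj_natAdd_natAdd (hG : G.IsThresholdGraph b) (i j : Fin z) :
    ¬ G.Adj (Fin.natAdd c i) (Fin.natAdd c j) := by
  simp [hG _ _]

end SimpleGraph.IsThresholdGraph

def thresholdTestVector (c : ℕ) {z : ℕ} (b : Fin z → ℕ) (t : ℝ) : Fin (c + z) → ℝ :=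
  Fin.addCases (fun _ ↦ 1) (fun i ↦ t * b i)

section thresholdTestVector

variable {c z : ℕ} (b : Fin z → ℕ) (t : ℝ)

@[simp]
theorem thresholdTestVector_castAdd (a : Fin c) :
    thresholdTestVector c b t (Fin.castAdd z a) = 1 :=
  Fin.addCases_left _

@[simp]
theorem thresholdTestVector_natAdd (i : Fin z) :
    thresholdTestVector c b t (Fin.natAdd c i) = t * b i :=
  Fin.addCases_right _

theorem thresholdTestVector_dotProduct_self :
    thresholdTestVector c b t ⬝ᵥ thresholdTestVector c b t =
      c + t ^ 2 * ∑ i, (b i : ℝ) ^ 2 := by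
  simp only [dotProduct, Fin.sum_univ_add, thresholdTestVector_castAdd,
    thresholdTestVector_natAdd, mul_one, sum_const, card_univ, Fintype.card_fin, nsmul_eq_mul,
    mul_sum]
  exact congrArg _ (sum_congr rfl fun i _ ↦ by ring)

theorem thresholdTestVector_dotProduct_adjMatrix_mulVec [NeZero z]
    {G : SimpleGraph (Fin (c + z))} [DecidableRel G.Adj] (hG : G.IsThresholdGraph b)
    (hb : ∀ i, b i ≤ c) :
    thresholdTestVector c b t ⬝ᵥ G.adjMatrix ℝ *ᵥ thresholdTestVector c b t =
      c * (c - 1) + 2 * t * ∑ i, (b i : ℝ) ^ 2 := by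
  rw [G.dotProduct_mulVec_adjMatrix]
  simp only [Fin.sum_univ_add, hG.adj_castAdd_castAdd, hG.adj_castAdd_natAdd,
    hG.adj_natAdd_castAdd, hG.not_adj_natAdd_natAdd, thresholdTestVector_castAdd,
    thresholdTestVector_natAdd, ne_eq, mul_one, one_mul, ite_false, sum_const_zero, add_zero,
    ite_not, sum_add_distrib]
  rw [sum_comm (f := fun (a : Fin c) (i : Fin z) ↦ if (a : ℕ) < b i then t * b i else 0)]
  simp only [sum_ite, sum_const_zero, filter_ne, sum_const, mem_univ, card_erase_of_mem,
    card_univ, Fintype.card_fin, nsmul_eq_mul, mul_one, zero_add, Fin.card_filter_val_lt, hb,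
    inf_of_le_right, add_zero]
  have hclique : (c : ℝ) * ↑(c - 1) = c * (c - 1) := by cases c <;> simp
  have hstar : ∑ i, (b i : ℝ) * (t * b i) = t * ∑ i, (b i : ℝ) ^ 2 := by
    rw [mul_sum]
    exact sum_congr rfl fun i _ ↦ by ring
  rw [hclique, hstar]
  ring

end thresholdTestVector

theorem mul_div_sq_mul_sub_one_add_div_sq_lt {C Z F : ℝ} (hC : 1 ≤ C) (hZ : 0 < Z)
    (hF₀ : 0 < F) (hF : F ≤ Z * (C - 1) ^ 2) :
    C * (F / (C + Z) ^ 2) * (C - 1 + F / (C + Z) ^ 2) < F := by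
  have hε : F / (C + Z) ^ 2 < Z := by
    have : (C - 1) ^ 2 < (C + Z) ^ 2 := by nlinarith
    rw [div_lt_iff₀ (by positivity)]
    nlinarith
  have hCr : C * (C - 1 + F / (C + Z) ^ 2) < (C + Z) ^ 2 := by nlinarith
  calc C * (F / (C + Z) ^ 2) * (C - 1 + F / (C + Z) ^ 2)
      = F / (C + Z) ^ 2 * (C * (C - 1 + F / (C + Z) ^ 2)) := by ring
    _ < F / (C + Z) ^ 2 * (C + Z) ^ 2 := by gcongr
    _ = F := div_mul_cancel₀ F (by positivity)

theorem lt_of_le_mul_add_inv_sq {C F ε ρ : ℝ} (hC : 0 ≤ C) (hF : 0 < F) (hr : 0 < C - 1 + ε)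
    (hCε : C * ε * (C - 1 + ε) < F)
    (h : C * (C - 1) + 2 * (C - 1 + ε)⁻¹ * F ≤ ρ * (C + (C - 1 + ε)⁻¹ ^ 2 * F)) :
    C - 1 + ε < ρ := by
  set r := C - 1 + ε
  have hN : 0 < C + r⁻¹ ^ 2 * F := by positivity
  have hgap : r * (C + r⁻¹ ^ 2 * F) = C * (C - 1) + 2 * r⁻¹ * F - (F - C * ε * r) / r := by
    field_simp
    ring
  have hgap_pos : 0 < (F - C * ε * r) / r := div_pos (by linarith) hr
  exact lt_of_mul_lt_mul_right (h.trans_lt' (by linarith)) hN.le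

/-- A connected threshold graph on `n = c + z ≥ 4` vertices, built from the
clique `K_c` (type-1 vertices) by attaching `z` type-0 vertices, the `i`-th of which is
joined to the first `b i` clique vertices (`1 ≤ b i ≤ c − 1`, BZP sequence nonincreasing),
has spectral radius `ρ > c − 1 + F₁/n²` where `F₁ = ∑ bᵢ²`. -/
theorem threshold_lower_bound_lazy (c z : ℕ) (hz : 1 ≤ z)
    (b : Fin z → ℕ) (hb : ∀ i, 1 ≤ b i ∧ b i ≤ c - 1)
    (G : SimpleGraph (Fin (c + z))) [DecidableRel G.Adj]
    (hG : ∀ u v : Fin (c + z), G.Adj u v ↔ u ≠ v ∧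
      ((u.1 < c ∧ v.1 < c) ∨
       (u.1 < c ∧ c ≤ v.1 ∧ u.1 < b ⟨v.1 - c, by have := v.isLt; omega⟩) ∨
       (v.1 < c ∧ c ≤ u.1 ∧ v.1 < b ⟨u.1 - c, by have := u.isLt; omega⟩)))
    (ρ : ℝ)
    (hρ₂ : ∀ μ ∈ spectrum ℝ (G.adjMatrix ℝ), |μ| ≤ ρ) :
    ρ > (c : ℝ) - 1 + (∑ i, (b i : ℝ) ^ 2) / ((c : ℝ) + z) ^ 2 := by
  have : NeZero z := ⟨by omega⟩
  have hb_real : ∀ i, (1 : ℝ) ≤ b i ∧ (b i : ℝ) + 1 ≤ c := fun i ↦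
    ⟨by exact_mod_cast (hb i).1, by exact_mod_cast (by have := hb i; omega : b i + 1 ≤ c)⟩
  have hc : (1 : ℝ) ≤ c := by linarith [hb_real ⟨0, hz⟩]
  set F := ∑ i, (b i : ℝ) ^ 2
  have hF₀ : 0 < F := sum_pos (fun i _ ↦ by nlinarith [hb_real i]) univ_nonempty
  have hF : F ≤ z * (c - 1) ^ 2 := by
    simpa using sum_le_card_nsmul univ (fun i ↦ (b i : ℝ) ^ 2) (((c : ℝ) - 1) ^ 2)
      fun i _ ↦ by nlinarith [hb_real i]
  set r := (c : ℝ) - 1 + F / (c + z) ^ 2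
  have hr : 0 < r := add_pos_of_nonneg_of_pos (by linarith) (by positivity)
  have hA : (G.adjMatrix ℝ).IsHermitian := G.isSymm_adjMatrix
  have hrayleigh := hA.dotProduct_mulVec_le (fun μ hμ ↦ (le_abs_self μ).trans (hρ₂ μ hμ))
    (thresholdTestVector c b r⁻¹)
  rw [thresholdTestVector_dotProduct_adjMatrix_mulVec b _ hG (fun i ↦ by have := hb i; omega),
    thresholdTestVector_dotProduct_self] at hrayleigh
  exact lt_of_le_mul_add_inv_sq (by linarith) hF₀ hr
    (mul_div_sq_mul_sub_one_add_div_sq_lt hc (by exact_mod_cast hz) hF₀ hF) hrayleigh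
end

section
/- Let c ≥ 3 be an integer and F₁ > 0, and let P(x) = x³ − (c+1)x² + cx − F₁. Define (L_k) by L_k = c^k for 0 ≤ k ≤ 2 and L_k = c·L_{k−1} + F₁∑_{r=0}^{k−3}L_r for k ≥ 3, and let ξ be the greatest real root of P. Then lim_{k→∞} L_k^{1/k} = ξ. -/
open Filter Real

private lemma rpow_one_div_tendsto (a : ℝ) (ha : 0 < a) :
    Tendsto (fun k : ℕ => a ^ (1/(k:ℝ))) atTop (nhds 1) := by
  have h : Tendsto (fun k : ℕ => Real.log a * (1/(k:ℝ))) atTop (nhds 0) := by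
    simpa using (tendsto_one_div_atTop_nhds_zero_nat).const_mul (Real.log a)
  have h2 := (Real.continuous_exp.tendsto 0).comp h
  simp only [Function.comp_def, Real.exp_zero] at h2
  refine h2.congr fun k => ?_
  rw [Real.rpow_def_of_pos ha]

private lemma rpow_upper_aux (ξ : ℝ) (hξ : 0 < ξ) (k : ℕ) (hk : 1 ≤ k) (x : ℝ)
    (hx : 0 < x) (hle : x ≤ ξ ^ k) : x ^ (1/(k:ℝ)) ≤ ξ := by
  have hk0 : (0:ℝ) < (k:ℝ) := by exact_mod_cast hk
  have h1 : x ^ (1/(k:ℝ)) ≤ (ξ ^ k) ^ (1/(k:ℝ)) :=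
    Real.rpow_le_rpow hx.le hle (by positivity)
  calc x ^ (1/(k:ℝ)) ≤ (ξ ^ k) ^ (1/(k:ℝ)) := h1
    _ = ξ := by
      rw [← Real.rpow_natCast ξ k, ← Real.rpow_mul hξ.le]
      rw [mul_one_div, div_self (ne_of_gt hk0), Real.rpow_one]

private lemma rpow_lower_aux (η m : ℝ) (hη : 0 < η) (hm : 0 < m) (k : ℕ) (hk : 1 ≤ k)
    (x : ℝ) (hge : m * η ^ k ≤ x) : m ^ (1/(k:ℝ)) * η ≤ x ^ (1/(k:ℝ)) := by
  have hk0 : (0:ℝ) < (k:ℝ) := by exact_mod_cast hk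
  have h1 : (m * η ^ k) ^ (1/(k:ℝ)) ≤ x ^ (1/(k:ℝ)) :=
    Real.rpow_le_rpow (by positivity) hge (by positivity)
  calc m ^ (1/(k:ℝ)) * η = (m * η ^ k) ^ (1/(k:ℝ)) := by
        rw [Real.mul_rpow hm.le (by positivity), ← Real.rpow_natCast η k,
          ← Real.rpow_mul hη.le]
        rw [mul_one_div, div_self (ne_of_gt hk0), Real.rpow_one]
    _ ≤ x ^ (1/(k:ℝ)) := h1

set_option maxHeartbeats 2000000 in
/-- With `L_k = c^k` for `0 ≤ k ≤ 2` and
`L_k = c·L_{k−1} + F₁·∑_{r=0}^{k−3} L_r` for `k ≥ 3`, and `ξ` the greatest real root of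
`x³ − (c+1)x² + cx − F₁`, we have `lim_{k→∞} L_k^{1/k} = ξ`. -/
theorem aux_sequence_growth (c : ℕ) (hc : 3 ≤ c) (F₁ : ℝ) (hF : 0 < F₁)
    (L : ℕ → ℝ)
    (h0 : ∀ k : ℕ, k ≤ 2 → L k = (c : ℝ) ^ k)
    (hrec : ∀ k : ℕ, 3 ≤ k →
      L k = c * L (k - 1) + F₁ * ∑ r ∈ Finset.range (k - 2), L r)
    (ξ : ℝ) (hroot : ξ ^ 3 - (c + 1) * ξ ^ 2 + c * ξ - F₁ = 0)
    (hmax : ∀ y : ℝ, y ^ 3 - (c + 1) * y ^ 2 + c * y - F₁ = 0 → y ≤ ξ) :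
    Filter.Tendsto (fun k : ℕ => (L k) ^ (1 / (k : ℝ))) Filter.atTop (nhds ξ) := by
  have hc3 : (3:ℝ) ≤ (c:ℝ) := by exact_mod_cast hc
  have hc0 : (0:ℝ) < (c:ℝ) := by linarith
  -- ξ > c via the intermediate value theorem
  have hξc : (c : ℝ) < ξ := by
    set f : ℝ → ℝ := fun x => x ^ 3 - (c + 1) * x ^ 2 + c * x - F₁ with hf
    have hcont : ContinuousOn f (Set.Icc (c:ℝ) ((c:ℝ)+1+F₁)) := by fun_prop
    have hab : (c:ℝ) ≤ (c:ℝ)+1+F₁ := by linarith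
    have hfa : f (c:ℝ) = -F₁ := by simp only [hf]; ring
    have hfb : 0 ≤ f ((c:ℝ)+1+F₁) := by
      simp only [hf]
      nlinarith [sq_nonneg ((c:ℝ)+1+F₁), hF.le, hc3]
    have h0' : (0:ℝ) ∈ Set.Icc (f (c:ℝ)) (f ((c:ℝ)+1+F₁)) := by
      constructor <;> [rw [hfa]; skip] <;> linarith
    obtain ⟨x, hx, hfx⟩ := intermediate_value_Icc hab hcont h0'
    have hxξ := hmax x hfx
    have hne : (c:ℝ) ≠ x := by
      intro h; rw [← h] at hfx; rw [hfa] at hfx; linarith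
    exact lt_of_lt_of_le (lt_of_le_of_ne hx.1 hne) hxξ
  have hξ0 : (0:ℝ) < ξ := by linarith
  have hξ1 : (1:ℝ) < ξ := by linarith
  -- The polynomial is negative on [c, ξ)
  have hPneg : ∀ y : ℝ, (c:ℝ) ≤ y → y < ξ →
      y ^ 3 - (c + 1) * y ^ 2 + c * y - F₁ < 0 := by
    intro y hy1 hy2
    have hfac : y ^ 3 - (c + 1) * y ^ 2 + c * y - F₁
        = (y - ξ) * (y ^ 2 + (ξ - (c+1)) * y + F₁ / ξ) := by
      field_simp
      linear_combination y * hroot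
    rw [hfac]
    have hQ : 0 < y ^ 2 + (ξ - (c+1)) * y + F₁ / ξ := by
      have : 0 < F₁ / ξ := div_pos hF hξ0
      nlinarith [mul_nonneg (sub_nonneg.2 hy1) (by linarith : (0:ℝ) ≤ y)]
    nlinarith
  -- Positivity of L
  have hpos : ∀ k, 0 < L k := by
    intro k
    induction k using Nat.strong_induction_on with
    | _ k ih =>
      rcases le_or_gt k 2 with h | h
      · rw [h0 k h]; positivity
      · rw [hrec k h]
        have h1 : 0 < L (k - 1) := ih (k-1) (by omega)
        have h2 : 0 ≤ ∑ r ∈ Finset.range (k - 2), L r :=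
          Finset.sum_nonneg fun r hr => (ih r (by
            have := Finset.mem_range.1 hr; omega)).le
        positivity
  -- Upper bound: L k ≤ ξ ^ k
  have hupper : ∀ k, L k ≤ ξ ^ k := by
    intro k
    induction k using Nat.strong_induction_on with
    | _ k ih =>
      rcases le_or_gt k 2 with h | h
      · rw [h0 k h]
        exact pow_le_pow_left₀ hc0.le hξc.le k
      · obtain ⟨n, rfl⟩ : ∃ n, k = n + 3 := ⟨k - 3, by omega⟩
        rw [hrec (n+3) (by omega)]
        have e1 : n + 3 - 1 = n + 2 := by omega
        have e2 : n + 3 - 2 = n + 1 := by omega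
        rw [e1, e2]
        have hsum : ∑ r ∈ Finset.range (n+1), L r ≤ ∑ r ∈ Finset.range (n+1), ξ ^ r :=
          Finset.sum_le_sum fun r hr => ih r (by have := Finset.mem_range.1 hr; omega)
        have hgs : (ξ - 1) * ∑ r ∈ Finset.range (n+1), ξ ^ r = ξ ^ (n+1) - 1 := by
          rw [mul_comm, geom_sum_mul]
        have hL1 : L (n+2) ≤ ξ ^ (n+2) := ih (n+2) (by omega)
        have key : (c:ℝ) * ξ ^ (n+2) + F₁ * ∑ r ∈ Finset.range (n+1), ξ ^ r ≤ ξ ^ (n+3) := by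
          rw [← sub_nonneg]
          have expand : (ξ ^ (n+3) - ((c:ℝ) * ξ ^ (n+2)
              + F₁ * ∑ r ∈ Finset.range (n+1), ξ ^ r)) * (ξ - 1) = F₁ := by
            linear_combination ξ^(n+1) * hroot - F₁ * hgs
          nlinarith [expand, hF]
        calc (c:ℝ) * L (n+2) + F₁ * ∑ r ∈ Finset.range (n+1), L r
            ≤ (c:ℝ) * ξ ^ (n+2) + F₁ * ∑ r ∈ Finset.range (n+1), ξ ^ r := by gcongr
          _ ≤ ξ ^ (n+3) := key
  -- Lower bound: for any η ∈ (c, ξ) there is m > 0 with m·η^k ≤ L k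
  have hlower : ∀ η : ℝ, (c:ℝ) < η → η < ξ →
      ∃ m : ℝ, 0 < m ∧ ∀ k, m * η ^ k ≤ L k := by
    intro η hη1 hη2
    have hPη := hPneg η hη1.le hη2
    have hη1' : (1:ℝ) < η := by linarith
    have hη0 : (0:ℝ) < η := by linarith
    set δ : ℝ := -(η ^ 3 - (c + 1) * η ^ 2 + c * η - F₁) with hδ
    have hδ0 : 0 < δ := by simp only [hδ]; linarith
    obtain ⟨n₀, hn₀⟩ := pow_unbounded_of_one_lt (F₁ / δ) hη1'
    have hKey : ∀ n, n₀ ≤ n → F₁ ≤ δ * η ^ n := by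
      intro n hn
      have h1 : η ^ n₀ ≤ η ^ n := pow_le_pow_right₀ hη1'.le hn
      have : F₁ / δ < η ^ n := lt_of_lt_of_le hn₀ h1
      rw [div_lt_iff₀ hδ0] at this
      nlinarith
    set K := n₀ + 3 with hK
    set T := (Finset.range K).image (fun j => L j / η ^ j) with hT
    have hTne : T.Nonempty := by
      refine Finset.image_nonempty.2 ⟨0, ?_⟩
      simp [hK]
    set m := T.min' hTne with hm
    have hm0 : 0 < m := by
      obtain ⟨j, hj, hje⟩ := Finset.mem_image.1 (T.min'_mem hTne)
      rw [hm] at *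
      rw [← hje]
      exact div_pos (hpos j) (pow_pos hη0 j)
    have hmle : ∀ j, j < K → m * η ^ j ≤ L j := by
      intro j hj
      have : m ≤ L j / η ^ j := T.min'_le _ (Finset.mem_image_of_mem _ (Finset.mem_range.2 hj))
      rw [le_div_iff₀ (pow_pos hη0 j)] at this
      linarith
    refine ⟨m, hm0, ?_⟩
    intro k
    induction k using Nat.strong_induction_on with
    | _ k ih =>
      rcases lt_or_ge k K with h | h
      · exact hmle k h
      · obtain ⟨n, rfl⟩ : ∃ n, k = n + 3 := ⟨k - 3, by omega⟩
        rw [hrec (n+3) (by omega)]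
        have e1 : n + 3 - 1 = n + 2 := by omega
        have e2 : n + 3 - 2 = n + 1 := by omega
        rw [e1, e2]
        have hsum : ∑ r ∈ Finset.range (n+1), (m * η ^ r) ≤ ∑ r ∈ Finset.range (n+1), L r :=
          Finset.sum_le_sum fun r hr => ih r (by have := Finset.mem_range.1 hr; omega)
        have hgs : (η - 1) * ∑ r ∈ Finset.range (n+1), η ^ r = η ^ (n+1) - 1 := by
          rw [mul_comm, geom_sum_mul]
        have hL1 : m * η ^ (n+2) ≤ L (n+2) := ih (n+2) (by omega)
        have hFδ : F₁ ≤ δ * η ^ (n+1) := hKey (n+1) (by omega)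
        have key : m * η ^ (n+3)
            ≤ (c:ℝ) * (m * η ^ (n+2)) + F₁ * ∑ r ∈ Finset.range (n+1), (m * η ^ r) := by
          rw [← sub_nonneg]
          have expand : ((c:ℝ) * (m * η ^ (n+2))
              + F₁ * ∑ r ∈ Finset.range (n+1), (m * η ^ r) - m * η ^ (n+3)) * (η - 1)
              = m * (δ * η ^ (n+1) - F₁) := by
            have hsm : ∑ r ∈ Finset.range (n+1), (m * η ^ r)
                = m * ∑ r ∈ Finset.range (n+1), η ^ r := by
              rw [Finset.mul_sum]
            rw [hsm, hδ]
            linear_combination (m * F₁) * hgs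
          have h1 : 0 ≤ m * (δ * η ^ (n+1) - F₁) := by
            have : 0 ≤ δ * η ^ (n+1) - F₁ := by linarith
            positivity
          nlinarith [expand, h1]
        calc m * η ^ (n+3)
            ≤ (c:ℝ) * (m * η ^ (n+2)) + F₁ * ∑ r ∈ Finset.range (n+1), (m * η ^ r) := key
          _ ≤ (c:ℝ) * L (n+2) + F₁ * ∑ r ∈ Finset.range (n+1), L r := by gcongr
  -- Conclusion
  rw [Metric.tendsto_atTop]
  intro ε hε
  set η : ℝ := max ((ξ + c)/2) (ξ - ε/2) with hη
  have hη1 : (c:ℝ) < η := lt_of_lt_of_le (by linarith) (le_max_left _ _)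
  have hη2 : η < ξ := max_lt (by linarith) (by linarith)
  have hηε : ξ - ε/2 ≤ η := le_max_right _ _
  have hη0 : (0:ℝ) < η := by linarith
  obtain ⟨m, hm0, hml⟩ := hlower η hη1 hη2
  have hten : Tendsto (fun k : ℕ => m ^ (1/(k:ℝ)) * η) atTop (nhds η) := by
    simpa using (rpow_one_div_tendsto m hm0).mul_const η
  have hev : ∀ᶠ k : ℕ in atTop, ξ - ε < m ^ (1/(k:ℝ)) * η :=
    hten.eventually (lt_mem_nhds (show ξ - ε < η by linarith))
  obtain ⟨N, hN⟩ := eventually_atTop.1 hev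
  refine ⟨max N 1, fun k hk => ?_⟩
  have hk1 : 1 ≤ k := le_trans (le_max_right N 1) hk
  have hkN : N ≤ k := le_trans (le_max_left N 1) hk
  have hub : (L k) ^ (1/(k:ℝ)) ≤ ξ :=
    rpow_upper_aux ξ hξ0 k hk1 (L k) (hpos k) (hupper k)
  have hlb : m ^ (1/(k:ℝ)) * η ≤ (L k) ^ (1/(k:ℝ)) :=
    rpow_lower_aux η m hη0 hm0 k hk1 (L k) (hml k)
  have := hN k hkN
  rw [Real.dist_eq, abs_lt]
  constructor <;> linarith
end
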